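/- arXiv:1201.2363 — 2 statements merged into one kernel-verified Lean document; each statement's English description precedes it below -/
import Mathlib

section
/- Let m and n be positive even integers with m dividing n. The number of group homomorphisms from D_m into D_n is 4 + 4n + m·n. -/
/-!
A homomorphism `D_m → G` is the same as a pair `(a, b)` with `a ^ m = b ^ 2 = 1` and
`b a b = a⁻¹`. In `D_n` we sort such pairs by whether `a` and `b` are rotations or reflections.
For `m` even the relations become: `a = r t`, `b = r u` with `2t = 2u = 0` (4 pairs);
`a = r t`, `b = sr u` with `m t = 0` (`m n` pairs); `a = sr t`, `b = r u` with `2u = 0` (`2n` pairs);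
`a = sr t`, `b = sr u` with `2(u - t) = 0` (`2n` pairs). The counts rest on the fact that for
`k ∣ n` exactly `k` elements of `ZMod n` are killed by `k`, which follows from
`∑_{d ∣ k} φ(d) = k`, because a cyclic group has `φ(d)` elements of each order `d` dividing its order.
-/

open Finset

@[to_additive]
theorem IsCyclic.card_pow_eq_one_of_dvd {α : Type*} [Group α] [Finite α] [IsCyclic α] {k : ℕ}
    (hk : k ∣ Nat.card α) : Nat.card {a : α // a ^ k = 1} = k := by
  classical
  have := Fintype.ofFinite α
  have hk0 : k ≠ 0 := by rintro rfl; simp at hk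
  rw [Nat.card_eq_fintype_card] at hk
  calc Nat.card {a : α // a ^ k = 1}
      = #{a : α | a ^ k = 1} := by rw [Nat.card_eq_fintype_card, Fintype.card_subtype]
    _ = ∑ d ∈ k.divisors, #{a : α | orderOf a = d} :=
        (sum_card_orderOf_eq_card_pow_eq_one hk0).symm
    _ = ∑ d ∈ k.divisors, d.totient := Finset.sum_congr rfl fun d hd =>
        IsCyclic.card_orderOf_eq_totient ((Nat.dvd_of_mem_divisors hd).trans hk)
    _ = k := Nat.sum_totient k

namespace ZMod

variable {n k : ℕ} [NeZero n]

theorem card_nsmul_eq_zero_of_dvd (hk : k ∣ n) : Nat.card {t : ZMod n // k • t = 0} = k :=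
  IsAddCyclic.card_nsmul_eq_zero_of_dvd (by rwa [Nat.card_zmod])

theorem card_prod_nsmul_fst_eq_zero (hk : k ∣ n) :
    Nat.card {q : ZMod n × ZMod n // k • q.1 = 0} = k * n := by
  rw [Nat.card_congr (Equiv.prodSubtypeFstEquivSubtypeProd (p := (k • · = 0))), Nat.card_prod,
    card_nsmul_eq_zero_of_dvd hk, Nat.card_zmod]

theorem pow_val_add {G : Type*} [Group G] {a : G} (ha : a ^ n = 1) (i j : ZMod n) :
    a ^ (i + j).val = a ^ i.val * a ^ j.val := by
  rw [ZMod.val_add, ← pow_eq_pow_mod _ ha, pow_add]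

theorem pow_val_neg {G : Type*} [Group G] {a : G} (ha : a ^ n = 1) (i : ZMod n) :
    a ^ (-i).val = (a ^ i.val)⁻¹ :=
  eq_inv_of_mul_eq_one_left <| by rw [← pow_val_add ha, neg_add_cancel, ZMod.val_zero, pow_zero]

end ZMod

theorem mul_pow_mul_eq_inv {G : Type*} [Group G] {a b : G} (hb : b * b = 1)
    (hab : b * a * b = a⁻¹) (k : ℕ) : b * a ^ k * b = (a ^ k)⁻¹ := by
  have hb' : b⁻¹ = b := inv_eq_of_mul_eq_one_right hb
  calc b * a ^ k * b = (b * a * b⁻¹) ^ k := by rw [conj_pow, hb']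
    _ = (a ^ k)⁻¹ := by rw [hb', hab, inv_pow]

namespace DihedralGroup

section Hom

variable {G : Type*} [Group G]

def Rels (m : ℕ) (a b : G) : Prop :=
  a ^ m = 1 ∧ b * b = 1 ∧ b * a * b = a⁻¹

theorem rels_r_one_sr_zero (m : ℕ) : Rels m (r 1 : DihedralGroup m) (sr 0) :=
  ⟨r_one_pow_n, sr_mul_self 0, by simp [sr_mul_r, sr_mul_sr, inv_r]⟩

variable {m : ℕ} [NeZero m] {a b : G}

def homOfRels (h : Rels m a b) : DihedralGroup m →* G :=
  MonoidHom.mk' (fun | r i => a ^ i.val | sr i => b * a ^ i.val) <| by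
    obtain ⟨ha, hb, hab⟩ := h
    have hconj := mul_pow_mul_eq_inv hb hab
    have hcomm (i : ZMod m) : a ^ i.val * b = b * a ^ (-i).val := by
      rw [ZMod.pow_val_neg ha, ← hconj, ← mul_assoc, ← mul_assoc, hb, one_mul]
    rintro (i | i) (j | j)
    · exact ZMod.pow_val_add ha i j
    · show b * a ^ (j - i).val = a ^ i.val * (b * a ^ j.val)
      rw [← mul_assoc, hcomm, mul_assoc, ← ZMod.pow_val_add ha, neg_add_eq_sub]
    · show b * a ^ (i + j).val = b * a ^ i.val * a ^ j.val
      rw [ZMod.pow_val_add ha, mul_assoc]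
    · show a ^ (j - i).val = b * a ^ i.val * (b * a ^ j.val)
      rw [← mul_assoc, hconj, ← ZMod.pow_val_neg ha, ← ZMod.pow_val_add ha, neg_add_eq_sub]

variable (G m) in
def homEquiv : (DihedralGroup m →* G) ≃ {p : G × G // Rels m p.1 p.2} where
  toFun f := ⟨(f (r 1), f (sr 0)), by
    obtain ⟨h₁, h₂, h₃⟩ := rels_r_one_sr_zero m
    exact ⟨by rw [← map_pow, h₁, map_one], by rw [← map_mul, h₂, map_one],
      by rw [← map_mul, ← map_mul, h₃, map_inv]⟩⟩
  invFun p := homOfRels p.2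
  left_inv f := by
    ext (i | i)
    · show f (r 1) ^ i.val = f (r i)
      rw [← map_pow, r_one_pow, ZMod.natCast_zmod_val]
    · show f (sr 0) * f (r 1) ^ i.val = f (sr i)
      rw [← map_pow, ← map_mul, r_one_pow, ZMod.natCast_zmod_val, sr_mul_r, zero_add]
  right_inv := by
    rintro ⟨⟨a, b⟩, ha, hb, hab⟩
    ext
    · show a ^ (1 : ZMod m).val = a
      rw [ZMod.val_one_eq_one_mod, ← pow_eq_pow_mod _ ha, pow_one]
    · show b * a ^ (0 : ZMod m).val = b
      rw [ZMod.val_zero, pow_zero, mul_one]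

end Hom

section Pairs

variable {n : ℕ}

def prodSubtypeEquiv (R : DihedralGroup n → DihedralGroup n → Prop) :
    {p : DihedralGroup n × DihedralGroup n // R p.1 p.2} ≃
      {q : ZMod n × ZMod n // R (r q.1) (r q.2)} ⊕ {q : ZMod n × ZMod n // R (r q.1) (sr q.2)} ⊕
        {q : ZMod n × ZMod n // R (sr q.1) (r q.2)} ⊕ {q : ZMod n × ZMod n // R (sr q.1) (sr q.2)} where
  toFun
    | ⟨(r t, r u), h⟩ => .inl ⟨(t, u), h⟩
    | ⟨(r t, sr u), h⟩ => .inr (.inl ⟨(t, u), h⟩)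
    | ⟨(sr t, r u), h⟩ => .inr (.inr (.inl ⟨(t, u), h⟩))
    | ⟨(sr t, sr u), h⟩ => .inr (.inr (.inr ⟨(t, u), h⟩))
  invFun
    | .inl ⟨(t, u), h⟩ => ⟨(r t, r u), h⟩
    | .inr (.inl ⟨(t, u), h⟩) => ⟨(r t, sr u), h⟩
    | .inr (.inr (.inl ⟨(t, u), h⟩)) => ⟨(sr t, r u), h⟩
    | .inr (.inr (.inr ⟨(t, u), h⟩)) => ⟨(sr t, sr u), h⟩
  left_inv := by rintro ⟨⟨_ | _, _ | _⟩, _⟩ <;> rfl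
  right_inv := by rintro (⟨⟨_, _⟩, _⟩ | ⟨⟨_, _⟩, _⟩ | ⟨⟨_, _⟩, _⟩ | ⟨⟨_, _⟩, _⟩) <;> rfl

variable {m : ℕ} {t u : ZMod n}

theorem rels_r_r_iff (hm : 2 ∣ m) : Rels m (r t) (r u) ↔ 2 • t = 0 ∧ 2 • u = 0 := by
  obtain ⟨k, rfl⟩ := hm
  simp only [Rels, r_pow, r_mul_r, inv_r, one_def, r.injEq]
  constructor
  · rintro ⟨-, hu, htu⟩
    refine ⟨?_, by rwa [two_nsmul]⟩
    linear_combination htu - hu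
  · rintro ⟨ht, hu⟩
    rw [two_nsmul] at ht hu
    refine ⟨?_, hu, by linear_combination ht + hu⟩
    push_cast
    linear_combination (k : ZMod n) * ht

theorem rels_r_sr_iff : Rels m (r t) (sr u) ↔ m • t = 0 := by
  simp only [Rels, r_pow, ← r_zero, r.injEq, sr_mul_sr, sub_self, sr_mul_r, sub_add_cancel_left,
    inv_r, and_self, and_true, nsmul_eq_mul, mul_comm]

theorem sr_pow_eq_one (hm : 2 ∣ m) : sr t ^ m = 1 :=
  orderOf_dvd_iff_pow_eq_one.mp ((orderOf_sr t).symm ▸ hm)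

theorem rels_sr_r_iff (hm : 2 ∣ m) : Rels m (sr t) (r u) ↔ 2 • u = 0 := by
  simp only [Rels, sr_pow_eq_one hm, ← r_zero, r_mul_r, r.injEq, r_mul_sr, sr_mul_r,
    sub_add_cancel, inv_sr, and_true, true_and, two_nsmul]

theorem rels_sr_sr_iff (hm : 2 ∣ m) : Rels m (sr t) (sr u) ↔ 2 • (u - t) = 0 := by
  simp only [Rels, sr_pow_eq_one hm, sr_mul_self, sr_mul_sr, r_mul_sr, inv_sr, sr.injEq, true_and,
    two_nsmul]
  constructor <;> intro h <;> linear_combination h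

theorem card_rels_of_even [NeZero n] (hm : Even m) (hn : Even n) (hmn : m ∣ n) :
    Nat.card {p : DihedralGroup n × DihedralGroup n // Rels m p.1 p.2} = 4 + 4 * n + m * n := by
  have h2n : 2 ∣ n := hn.two_dvd
  have hrr : Nat.card {q : ZMod n × ZMod n // 2 • q.1 = 0 ∧ 2 • q.2 = 0} = 2 * 2 := by
    rw [Nat.card_congr (Equiv.subtypeProdEquivProd (p := (2 • · = 0)) (q := (2 • · = 0))),
      Nat.card_prod, ZMod.card_nsmul_eq_zero_of_dvd h2n]
  have hsr : Nat.card {q : ZMod n × ZMod n // 2 • q.2 = 0} = 2 * n :=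
    (Nat.card_congr (Equiv.subtypeEquiv (Equiv.prodComm _ _) fun _ => Iff.rfl)).trans
      (ZMod.card_prod_nsmul_fst_eq_zero h2n)
  have hss : Nat.card {q : ZMod n × ZMod n // 2 • (q.2 - q.1) = 0} = 2 * n :=
    (Nat.card_congr (Equiv.subtypeEquiv (Equiv.prodShear (Equiv.refl _) Equiv.subRight)
      fun _ => Iff.rfl)).trans hsr
  rw [Nat.card_congr (prodSubtypeEquiv _)]
  simp only [Nat.card_sum, rels_r_r_iff hm.two_dvd, rels_r_sr_iff, rels_sr_r_iff hm.two_dvd,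
    rels_sr_sr_iff hm.two_dvd]
  rw [hrr, ZMod.card_prod_nsmul_fst_eq_zero hmn, hsr, hss]
  ring

end Pairs

end DihedralGroup

open DihedralGroup in
theorem numHom_even_even_dvd (m n : ℕ) (hm : 0 < m) (hn : 0 < n) (hme : Even m) (hne : Even n)
    (hdvd : m ∣ n) :
    Nat.card (DihedralGroup m →* DihedralGroup n) = 4 + 4 * n + m * n := by
  have : NeZero m := ⟨hm.ne'⟩
  have : NeZero n := ⟨hn.ne'⟩
  rw [Nat.card_congr (homEquiv _ m)]
  exact card_rels_of_even hme hne hdvd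
end

section
/- For positive integers m and n, the number of group homomorphisms from D_m to D_n that send the rotation generator of D_m into the rotation subgroup of D_n and send the reflection generator of D_m to a reflection of D_n equals n·(∑_{k | gcd(m,n)} φ(k)). -/
/-!
A homomorphism `ρ : D_m → D_n` with `ρ r = r^a` and `ρ f = r^b f` is determined by `(a, b)`, and
the defining relations of `D_m` leave `b` free while forcing exactly `m a = 0` in `ℤ/n`, which is
the same as an additive homomorphism `ℤ/m → ℤ/n`, `1 ↦ a`. There are `gcd(m, n)` of these, and
`gcd(m, n) = ∑_{k ∣ gcd(m, n)} φ(k)`.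
-/

namespace ZMod

variable (m : ℕ) (A : Type*) [AddGroup A]

def addMonoidHomEquivNsmulEqZero : (ZMod m →+ A) ≃ {a : A // m • a = 0} :=
  (lift m).symm.trans <| Equiv.subtypeEquiv (zmultiplesHom A).symm fun f => by
    rw [zmultiplesHom_symm_apply, ← natCast_zsmul, ← map_zsmul, zsmul_one, Int.cast_natCast]

@[simp]
theorem addMonoidHomEquivNsmulEqZero_apply (f : ZMod m →+ A) :
    (addMonoidHomEquivNsmulEqZero m A f : A) = f 1 := by
  conv_rhs => rw [← (lift m).apply_symm_apply f, ← Int.cast_one, lift_coe]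
  rfl

theorem card_addMonoidHom (n : ℕ) [NeZero n] : Nat.card (ZMod m →+ ZMod n) = m.gcd n := by
  have h := IsAddCyclic.card_nsmulAddMonoidHom_ker (ZMod n) m
  rw [Nat.card_zmod] at h
  rw [Nat.card_congr (addMonoidHomEquivNsmulEqZero m (ZMod n)), Nat.gcd_comm, ← h]
  rfl

end ZMod

namespace DihedralGroup

variable {m n : ℕ}

theorem mem_zpowers_r_one_iff {x : DihedralGroup n} :
    x ∈ Subgroup.zpowers (r 1) ↔ ∃ a, x = r a := by
  simp only [Subgroup.mem_zpowers_iff, r_one_zpow]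
  constructor
  · rintro ⟨k, rfl⟩
    exact ⟨k, rfl⟩
  · rintro ⟨a, rfl⟩
    exact ⟨a.cast, by rw [ZMod.intCast_zmod_cast]⟩

theorem hom_ext {G : Type*} [Group G] {f g : DihedralGroup n →* G}
    (hr : f (r 1) = g (r 1)) (hsr : f (sr 0) = g (sr 0)) : f = g := by
  have hr' (i : ZMod n) : f (r i) = g (r i) := by
    rw [← ZMod.intCast_zmod_cast i, ← r_one_zpow, map_zpow, map_zpow, hr]
  ext (i | i)
  · exact hr' i
  · rw [← zero_add i, ← sr_mul_r, map_mul, map_mul, hsr, hr']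

def homOfAddMonoidHom (g : ZMod m →+ ZMod n) (b : ZMod n) : DihedralGroup m →* DihedralGroup n where
  toFun
    | r i => r (g i)
    | sr i => sr (b + g i)
  map_one' := congrArg r (map_zero g)
  map_mul' := by
    rintro (i | i) (j | j) <;>
      simp only [r_mul_r, r_mul_sr, sr_mul_r, sr_mul_sr, map_add, map_sub, r.injEq, sr.injEq] <;>
      abel

@[simp]
theorem homOfAddMonoidHom_r (g : ZMod m →+ ZMod n) (b : ZMod n) (i : ZMod m) :
    homOfAddMonoidHom g b (r i) = r (g i) := rfl

@[simp]
theorem homOfAddMonoidHom_sr (g : ZMod m →+ ZMod n) (b : ZMod n) (i : ZMod m) :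
    homOfAddMonoidHom g b (sr i) = sr (b + g i) := rfl

theorem homOfAddMonoidHom_injective :
    Function.Injective (Function.uncurry (homOfAddMonoidHom (m := m) (n := n))) := by
  rintro ⟨g, b⟩ ⟨g', b'⟩ h
  have hg : g = g' := AddMonoidHom.ext fun i => by
    simpa using DFunLike.congr_fun h (r i)
  have hb : b = b' := by
    simpa using DFunLike.congr_fun h (sr 0)
  rw [hg, hb]

theorem mem_range_homOfAddMonoidHom_iff {ρ : DihedralGroup m →* DihedralGroup n} :
    ρ ∈ Set.range (Function.uncurry homOfAddMonoidHom) ↔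
      (∃ a, ρ (r 1) = r a) ∧ ∃ b, ρ (sr 0) = sr b := by
  constructor
  · rintro ⟨⟨g, b⟩, rfl⟩
    exact ⟨⟨g 1, rfl⟩, ⟨b, by simp⟩⟩
  rintro ⟨⟨a, ha⟩, ⟨b, hb⟩⟩
  have hma : m • a = 0 := by
    have h := congrArg ρ (r_one_pow_n (n := m))
    rw [map_pow, ha, r_pow, map_one, one_def, r.injEq] at h
    rwa [nsmul_eq_mul, mul_comm]
  set g := (ZMod.addMonoidHomEquivNsmulEqZero m (ZMod n)).symm ⟨a, hma⟩
  have hg : g 1 = a := by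
    rw [← ZMod.addMonoidHomEquivNsmulEqZero_apply, Equiv.apply_symm_apply]
  refine ⟨(g, b), hom_ext ?_ ?_⟩ <;> simp [ha, hb, hg]

end DihedralGroup

theorem card_hom_rot_to_rot_f_to_reflection_general (m n : ℕ) (hn : 0 < n) :
    Nat.card {ρ : DihedralGroup m →* DihedralGroup n //
        ρ (DihedralGroup.r 1) ∈ Subgroup.zpowers (DihedralGroup.r (1 : ZMod n)) ∧
        ∃ b : ZMod n, ρ (DihedralGroup.sr 0) = DihedralGroup.sr b} =
      n * ∑ k ∈ (Nat.gcd m n).divisors, Nat.totient k := by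
  have : NeZero n := ⟨hn.ne'⟩
  rw [Nat.card_congr <| Equiv.subtypeEquivRight fun ρ => by
      rw [DihedralGroup.mem_zpowers_r_one_iff, ← DihedralGroup.mem_range_homOfAddMonoidHom_iff],
    Nat.card_range_of_injective DihedralGroup.homOfAddMonoidHom_injective, Nat.card_prod,
    ZMod.card_addMonoidHom, Nat.card_zmod, Nat.sum_totient, mul_comm]

theorem card_hom_rot_to_rot_f_to_reflection (m n : ℕ) (hm : 0 < m) (hn : 0 < n) :
    Nat.card {ρ : DihedralGroup m →* DihedralGroup n //
        ρ (DihedralGroup.r 1) ∈ Subgroup.zpowers (DihedralGroup.r (1 : ZMod n)) ∧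
        ∃ b : ZMod n, ρ (DihedralGroup.sr 0) = DihedralGroup.sr b} =
      n * ∑ k ∈ (Nat.gcd m n).divisors, Nat.totient k :=
  card_hom_rot_to_rot_f_to_reflection_general m n hn
end
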